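/- For every integer n ≥ 3, L(n+1) = L(n) or L(n+1) = L(n) + 1. -/

import Mathlib

noncomputable def L (n : ℕ) : ℕ :=
  sInf {k : ℕ | 0 < k ∧ (n.choose k : ℝ) > 2 ^ n / n}

/-!
Clearing the denominator, `k ≥ 1` is admissible for `n` iff `2 ^ n < n * C(n, k)`, and `L n ≤ n / 2`
because `2 ^ n = ∑ C(n, i) ≤ 2 + (n - 1) C(n, n / 2) < n C(n, n / 2)`.
Since `C(n + 1, k + 1) = (n + 1) / (k + 1) C(n, k)`, an admissible `k ≤ n / 2` for `n` makes `k + 1`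
admissible for `n + 1`, so `L (n + 1) ≤ L n + 1`. Since `C(n, k) = (n + 1 - k) / (n + 1) C(n + 1, k)`,
an admissible `k < n / 2` for `n + 1` is admissible for `n`; otherwise `L (n + 1) ≥ n / 2 ≥ L n`.
-/

open Finset in
theorem Nat.two_pow_lt_mul_choose_half {n : ℕ} (hn : 3 ≤ n) : 2 ^ n < n * n.choose (n / 2) := by
  obtain ⟨m, rfl⟩ : ∃ m, n = m + 2 := ⟨n - 2, by omega⟩
  set M := (m + 2).choose ((m + 2) / 2)
  have hM : 2 < M := (show 2 < (m + 2).choose 1 by simp; omega).trans_le (Nat.choose_le_middle _ _)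
  have hinner : ∑ i ∈ range (m + 1), (m + 2).choose (i + 1) ≤ (m + 1) * M := by
    simpa using sum_le_card_nsmul (range (m + 1)) _ M fun i _ ↦ Nat.choose_le_middle (i + 1) (m + 2)
  have hsum := Nat.sum_range_choose (m + 2)
  rw [sum_range_succ, sum_range_succ'] at hsum
  simp only [Nat.choose_self, Nat.choose_zero_right] at hsum
  nlinarith

lemma two_pow_div_lt_choose_iff {n k : ℕ} (hn : 0 < n) :
    (2 ^ n / n : ℝ) < n.choose k ↔ 2 ^ n < n * n.choose k := by
  rw [div_lt_iff₀ (by positivity), mul_comm]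
  exact_mod_cast Iff.rfl

lemma L_eq_sInf {n : ℕ} (hn : 0 < n) : L n = sInf {k | 0 < k ∧ 2 ^ n < n * n.choose k} := by
  simp only [L, gt_iff_lt, two_pow_div_lt_choose_iff hn]

lemma L_le_of_two_pow_lt {n k : ℕ} (hk : 0 < k) (h : 2 ^ n < n * n.choose k) : L n ≤ k := by
  have hn : 0 < n := Nat.pos_of_ne_zero (by rintro rfl; simp at h)
  rw [L_eq_sInf hn]
  exact Nat.sInf_le ⟨hk, h⟩

lemma L_le_half {n : ℕ} (hn : 3 ≤ n) : L n ≤ n / 2 :=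
  L_le_of_two_pow_lt (by omega) (Nat.two_pow_lt_mul_choose_half hn)

lemma L_pos_and_two_pow_lt {n : ℕ} (hn : 3 ≤ n) : 0 < L n ∧ 2 ^ n < n * n.choose (L n) := by
  rw [L_eq_sInf (by omega)]
  exact Nat.sInf_mem (s := {k | 0 < k ∧ 2 ^ n < n * n.choose k})
    ⟨n / 2, by omega, Nat.two_pow_lt_mul_choose_half hn⟩

lemma two_pow_succ_lt_mul_choose_succ {n k : ℕ} (hk : 2 * k ≤ n) (h : 2 ^ n < n * n.choose k) :
    2 ^ (n + 1) < (n + 1) * (n + 1).choose (k + 1) := by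
  have hcmp : 2 * n * (k + 1) ≤ (n + 1) ^ 2 := by nlinarith
  have hn : 0 < n := Nat.pos_of_ne_zero (by rintro rfl; simp at h)
  have key : n * (2 ^ (n + 1) * (k + 1)) < n * ((n + 1) * (n + 1).choose (k + 1) * (k + 1)) :=
    calc n * (2 ^ (n + 1) * (k + 1))
        = 2 * n * (k + 1) * 2 ^ n := by ring
      _ ≤ (n + 1) ^ 2 * 2 ^ n := Nat.mul_le_mul_right _ hcmp
      _ < (n + 1) ^ 2 * (n * n.choose k) := Nat.mul_lt_mul_of_pos_left h (by positivity)
      _ = n * (n + 1) * ((n + 1) * n.choose k) := by ring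
      _ = n * ((n + 1) * (n + 1).choose (k + 1) * (k + 1)) := by
        rw [Nat.add_one_mul_choose_eq]; ring
  exact Nat.lt_of_mul_lt_mul_right (Nat.lt_of_mul_lt_mul_left key)

lemma two_pow_lt_mul_choose_of_succ {n k : ℕ} (hk : 2 * k < n)
    (h : 2 ^ (n + 1) < (n + 1) * (n + 1).choose k) : 2 ^ n < n * n.choose k := by
  obtain ⟨d, hd⟩ : ∃ d, n + 1 - k = d := ⟨_, rfl⟩
  have hid : n.choose k * (n + 1) = (n + 1).choose k * d := hd ▸ Nat.choose_mul_succ_eq n k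
  have h2d : n + 3 ≤ 2 * d := by omega
  have hcmp : (n + 1) ^ 2 ≤ 2 * n * d := by nlinarith [Nat.mul_le_mul_left n h2d]
  have key : (n + 1) ^ 2 * 2 ^ n < (n + 1) ^ 2 * (n * n.choose k) :=
    calc (n + 1) ^ 2 * 2 ^ n
        ≤ 2 * n * d * 2 ^ n := Nat.mul_le_mul_right _ hcmp
      _ = n * d * 2 ^ (n + 1) := by ring
      _ < n * d * ((n + 1) * (n + 1).choose k) :=
        Nat.mul_lt_mul_of_pos_left h (Nat.mul_pos (by omega) (by omega))
      _ = n * (n + 1) * ((n + 1).choose k * d) := by ring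
      _ = (n + 1) ^ 2 * (n * n.choose k) := by rw [← hid]; ring
  exact Nat.lt_of_mul_lt_mul_left key

theorem L_succ_eq_or_succ (n : ℕ) (hn : 3 ≤ n) :
    L (n + 1) = L n ∨ L (n + 1) = L n + 1 := by
  have hlt := (L_pos_and_two_pow_lt hn).2
  have hhalf := L_le_half hn
  have hup : L (n + 1) ≤ L n + 1 :=
    L_le_of_two_pow_lt (Nat.succ_pos _) (two_pow_succ_lt_mul_choose_succ (by omega) hlt)
  have hlo : L n ≤ L (n + 1) := by
    obtain ⟨hpos', hlt'⟩ := L_pos_and_two_pow_lt (n := n + 1) (by omega)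
    by_cases h : 2 * L (n + 1) < n
    · exact L_le_of_two_pow_lt hpos' (two_pow_lt_mul_choose_of_succ h hlt')
    · omega
  omega
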